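/- Let G be a connected weighted undirected graph with incidence matrix B and positive weight matrix 𝒜. Let z ∈ ℂ^n with ‖Bᵀz‖_∞ ≤ γ < π/2. Then the matrix L_{sinc(Bᵀz)} := B𝒜[sinc(Bᵀz)]Bᵀ has rank n−1, where sinc(w) = sin(w)/w (with sinc(0)=1) applied entrywise. -/

import Mathlib

/-! For `‖w‖ < π/2` the real part of `sinc w` is positive: writing `w = x + iy`, it is
`(x sin x cosh y + y sinh y cos x) / |w|²`. Hence `L = B D Bᵀ` with
`D = diag (a · sinc (Bᵀ z))` satisfies `Re (x* L x) = ∑ₑ Re Dₑ |(Bᵀ x)ₑ|²`, so `L x = 0` forces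
`Bᵀ x = 0`. Connectivity and the zero column sums of `B` make `ker Bᵀ` the constant vectors,
and rank–nullity gives `n - 1`. -/

open Matrix

/-- The complex sinc function: `sinc z = sin z / z` for `z ≠ 0` and `sinc 0 = 1`. -/
noncomputable def csinc (z : ℂ) : ℂ := if z = 0 then 1 else Complex.sin z / z

namespace Real

lemma mul_sin_pos {x : ℝ} (hx0 : x ≠ 0) (hx : |x| < π) : 0 < x * sin x := by
  rcases abs_lt.1 hx with ⟨hlo, hhi⟩
  rcases hx0.lt_or_gt with hneg | hpos
  · exact mul_pos_of_neg_of_neg hneg (sin_neg_of_neg_of_neg_pi_lt hneg hlo)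
  · exact mul_pos hpos (sin_pos_of_pos_of_lt_pi hpos hhi)

lemma mul_sinh_pos {x : ℝ} (hx0 : x ≠ 0) : 0 < x * sinh x := by
  rcases hx0.lt_or_gt with hneg | hpos
  · exact mul_pos_of_neg_of_neg hneg (sinh_neg_iff.2 hneg)
  · exact mul_pos hpos (sinh_pos_iff.2 hpos)

lemma mul_sinh_nonneg (x : ℝ) : 0 ≤ x * sinh x := by
  rcases eq_or_ne x 0 with rfl | hx0
  · simp
  · exact (mul_sinh_pos hx0).le

end Real

lemma Complex.sin_re (z : ℂ) : (Complex.sin z).re = Real.sin z.re * Real.cosh z.im := by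
  rw [Complex.sin_eq]
  simp [← Complex.ofReal_sin, ← Complex.ofReal_cosh, ← Complex.ofReal_cos, ← Complex.ofReal_sinh]

lemma Complex.sin_im (z : ℂ) : (Complex.sin z).im = Real.cos z.re * Real.sinh z.im := by
  rw [Complex.sin_eq]
  simp [← Complex.ofReal_sin, ← Complex.ofReal_cosh, ← Complex.ofReal_cos, ← Complex.ofReal_sinh]

lemma csinc_re_pos {w : ℂ} (hw : ‖w‖ < Real.pi / 2) : 0 < (csinc w).re := by
  rcases eq_or_ne w 0 with rfl | hw0
  · simp [csinc]
  have hre : |w.re| < Real.pi / 2 := (Complex.abs_re_le_norm w).trans_lt hw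
  have hcos : 0 < Real.cos w.re := Real.cos_pos_of_mem_Ioo (abs_lt.1 hre)
  have hnum : 0 < Real.cosh w.im * (w.re * Real.sin w.re) +
      Real.cos w.re * (w.im * Real.sinh w.im) := by
    rcases eq_or_ne w.re 0 with hre0 | hre0
    · have him0 : w.im ≠ 0 := fun h => hw0 (Complex.ext hre0 h)
      simpa [hre0] using Real.mul_sinh_pos him0
    · exact add_pos_of_pos_of_nonneg
        (mul_pos (Real.cosh_pos _) (Real.mul_sin_pos hre0 (by linarith [Real.pi_pos])))
        (mul_nonneg hcos.le (Real.mul_sinh_nonneg _))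
  rw [csinc, if_neg hw0, Complex.div_re, Complex.sin_re, Complex.sin_im, ← add_div]
  exact div_pos (by linarith) (Complex.normSq_pos.2 hw0)

namespace Matrix

section QuadraticForm

variable {ι κ 𝕜 : Type*} [Fintype ι] [Fintype κ] [DecidableEq κ] [RCLike 𝕜]

lemma star_dotProduct_mul_diagonal_mul_conjTranspose_mulVec (A : Matrix ι κ 𝕜) (d : κ → 𝕜)
    (x : ι → 𝕜) :
    star x ⬝ᵥ ((A * diagonal d * Aᴴ) *ᵥ x) = ∑ k, d k * (‖(Aᴴ *ᵥ x) k‖ ^ 2 : ℝ) := by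
  rw [← mulVec_mulVec, ← mulVec_mulVec, dotProduct_mulVec,
    show star x ᵥ* A = star (Aᴴ *ᵥ x) by rw [star_mulVec, conjTranspose_conjTranspose],
    dotProduct]
  refine Finset.sum_congr rfl fun k _ => ?_
  rw [mulVec_diagonal, RCLike.ofReal_pow, ← RCLike.conj_mul, Pi.star_apply, RCLike.star_def]
  ring

lemma ker_mulVecLin_mul_diagonal_mul_conjTranspose (A : Matrix ι κ 𝕜) (d : κ → 𝕜)
    (hd : ∀ k, 0 < RCLike.re (d k)) :
    LinearMap.ker (A * diagonal d * Aᴴ).mulVecLin = LinearMap.ker Aᴴ.mulVecLin := by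
  ext x
  simp only [LinearMap.mem_ker, mulVecLin_apply]
  refine ⟨fun hx => ?_, fun hx => by rw [← mulVec_mulVec, hx, mulVec_zero]⟩
  have hsum : ∑ k, RCLike.re (d k) * ‖(Aᴴ *ᵥ x) k‖ ^ 2 = 0 := by
    simpa [map_sum, hx] using
      congrArg RCLike.re (star_dotProduct_mul_diagonal_mul_conjTranspose_mulVec A d x).symm
  have hterm := (Finset.sum_eq_zero_iff_of_nonneg fun k _ =>
    mul_nonneg (hd k).le (sq_nonneg ‖(Aᴴ *ᵥ x) k‖)).1 hsum
  ext k
  simpa [(hd k).ne'] using hterm k (Finset.mem_univ k)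

end QuadraticForm

section RealMatrix

variable {ι κ : Type*} [Fintype ι]

lemma re_map_ofReal_mulVec (M : Matrix κ ι ℝ) (v : ι → ℂ) (k : κ) :
    ((M.map Complex.ofReal *ᵥ v) k).re = (M *ᵥ fun i => (v i).re) k := by
  simp [mulVec, dotProduct, Complex.re_sum]

lemma im_map_ofReal_mulVec (M : Matrix κ ι ℝ) (v : ι → ℂ) (k : κ) :
    ((M.map Complex.ofReal *ᵥ v) k).im = (M *ᵥ fun i => (v i).im) k := by
  simp [mulVec, dotProduct, Complex.im_sum]

lemma map_ofReal_mulVec_eq_zero_iff (M : Matrix κ ι ℝ) (v : ι → ℂ) :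
    M.map Complex.ofReal *ᵥ v = 0 ↔
      (M *ᵥ fun i => (v i).re) = 0 ∧ (M *ᵥ fun i => (v i).im) = 0 := by
  simp only [funext_iff, Complex.ext_iff, re_map_ofReal_mulVec, im_map_ofReal_mulVec,
    Pi.zero_apply, Complex.zero_re, Complex.zero_im, forall_and]

lemma ker_map_ofReal_mulVecLin_eq_span_one (M : Matrix κ ι ℝ) (hM : M *ᵥ 1 = 0)
    (hker : ∀ v : ι → ℝ, M *ᵥ v = 0 → ∃ c, ∀ i, v i = c) :
    LinearMap.ker (M.map Complex.ofReal).mulVecLin = ℂ ∙ (1 : ι → ℂ) := by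
  ext v
  rw [LinearMap.mem_ker, mulVecLin_apply, map_ofReal_mulVec_eq_zero_iff,
    Submodule.mem_span_singleton]
  constructor
  · rintro ⟨hre, him⟩
    obtain ⟨c₁, hc₁⟩ := hker _ hre
    obtain ⟨c₂, hc₂⟩ := hker _ him
    exact ⟨⟨c₁, c₂⟩, funext fun i => Complex.ext (by simp [hc₁]) (by simp [hc₂])⟩
  · have hconst (r : ℝ) : (M *ᵥ fun _ => r) = 0 := by
      rw [show (fun _ => r) = r • (1 : ι → ℝ) by ext; simp, mulVec_smul, hM, smul_zero]
    rintro ⟨c, rfl⟩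
    simp [hconst]

lemma rank_eq_card_sub_one_of_ker_eq_span_one {K : Type*} [Field K] (A : Matrix κ ι K)
    (hA : LinearMap.ker A.mulVecLin = K ∙ (1 : ι → K)) : A.rank = Fintype.card ι - 1 := by
  rcases isEmpty_or_nonempty ι with hι | hι
  · have := A.rank_le_card_width
    rw [Fintype.card_eq_zero] at this ⊢
    omega
  · have hnullity := LinearMap.finrank_range_add_finrank_ker A.mulVecLin
    rw [Module.finrank_fintype_fun_eq_card, hA, finrank_span_singleton one_ne_zero] at hnullity
    rw [rank]
    omega

lemma transpose_mulVec_one_of_incidence (B : Matrix ι κ ℝ)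
    (hB : ∀ e, ∃ i j, i ≠ j ∧ B i e = 1 ∧ B j e = -1 ∧ ∀ k, k ≠ i → k ≠ j → B k e = 0) :
    Bᵀ *ᵥ 1 = 0 := by
  funext e
  obtain ⟨i, j, hij, hi, hj, hk⟩ := hB e
  simp only [mulVec, dotProduct, transpose_apply, Pi.one_apply, mul_one, Pi.zero_apply]
  rw [Fintype.sum_eq_add i j hij fun k hk' => hk k hk'.1 hk'.2, hi, hj]
  norm_num

end RealMatrix

end Matrix

theorem rank_complex_sinc_laplacian
    (n m : ℕ) (B : Matrix (Fin n) (Fin m) ℝ) (a : Fin m → ℝ)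
    (ha : ∀ e, 0 < a e)
    (hB : ∀ e : Fin m, ∃ i j : Fin n, i ≠ j ∧ B i e = 1 ∧ B j e = -1 ∧
      ∀ k, k ≠ i → k ≠ j → B k e = 0)
    (hconn : ∀ v : Fin n → ℝ, B.transpose.mulVec v = 0 → ∃ c, ∀ i, v i = c)
    (γ : ℝ) (hγ : γ < Real.pi / 2)
    (z : Fin n → ℂ)
    (hz : ∀ e, ‖(B.map (Complex.ofReal)).transpose.mulVec z e‖ ≤ γ) :
    ((B.map (Complex.ofReal)) * Matrix.diagonal (fun e => (a e : ℂ)) *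
      Matrix.diagonal (fun e => csinc ((B.map (Complex.ofReal)).transpose.mulVec z e)) *
      (B.map (Complex.ofReal)).transpose).rank = n - 1 := by
  set Bc := B.map Complex.ofReal
  set d : Fin m → ℂ := fun e => a e * csinc ((Bcᵀ *ᵥ z) e)
  have hweights : ∀ e, 0 < (d e).re := fun e => by
    rw [Complex.re_ofReal_mul]
    exact mul_pos (ha e) (csinc_re_pos ((hz e).trans_lt hγ))
  have hconj : Bcᴴ = Bcᵀ := by
    ext; simp [Bc]
  refine (rank_eq_card_sub_one_of_ker_eq_span_one _ ?_).trans (by rw [Fintype.card_fin])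
  have hker := ker_mulVecLin_mul_diagonal_mul_conjTranspose Bc d hweights
  rw [hconj] at hker
  rw [Matrix.mul_assoc Bc, diagonal_mul_diagonal, hker, ← transpose_map]
  exact ker_map_ofReal_mulVecLin_eq_span_one Bᵀ (transpose_mulVec_one_of_incidence B hB) hconn
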